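/- arXiv:2404.14855 — 2 statements merged into one kernel-verified Lean document; each statement's English description precedes it below -/
import Mathlib

section
/- For L ≥ k ≥ j ≥ i ≥ 0, the dimension of the flow subspace A_{kji} = null W_{k+1∼j} ∩ col W_{j∼i} equals Σ_{t=j}^{k} Σ_{s=0}^{i} ω_{ts}, where ω_{ts} = rk W_{t∼s} − rk W_{t∼s−1} − rk W_{t+1∼s} + rk W_{t+1∼s−1} (with conventions rk W_{L+1∼x} = 0, rk W_{y∼−1} = 0, rk W_{j∼j} = d_j). -/
open Matrix

/-- The subsequence matrix `W_{k∼i} = W_k W_{k−1} ⋯ W_{i+1}` of a linear neural network.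
Here `W j` is the matrix of edge layer `j+1` (mapping unit layer `j` to unit layer `j+1`),
so `subseq d W i k` is the product of the edge-layer matrices carrying unit layer `i`
to unit layer `k`.  By convention `subseq d W k k` is the identity, and values with
`k < i` are junk. -/
noncomputable def subseq (d : ℕ → ℕ)
    (W : ∀ j : ℕ, Matrix (Fin (d (j + 1))) (Fin (d j)) ℝ) (i : ℕ) :
    (k : ℕ) → Matrix (Fin (d k)) (Fin (d i)) ℝ
  | 0 =>
    if h : i = 0 then
      (1 : Matrix (Fin (d 0)) (Fin (d 0)) ℝ).submatrix id (Fin.cast (congrArg d h))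
    else 0
  | k + 1 =>
    if h : i = k + 1 then
      (1 : Matrix (Fin (d (k + 1))) (Fin (d (k + 1))) ℝ).submatrix id (Fin.cast (congrArg d h))
    else W k * subseq d W i k

/-- The flow subspace `A_{kji} = null W_{k+1∼j} ∩ col W_{j∼i}`, a subspace of `ℝ^{d_j}`. -/
noncomputable def Aflow (d : ℕ → ℕ)
    (W : ∀ j : ℕ, Matrix (Fin (d (j + 1))) (Fin (d j)) ℝ) (k j i : ℕ) :
    Submodule ℝ (Fin (d j) → ℝ) :=
  LinearMap.ker (Matrix.mulVecLin (subseq d W j (k + 1)))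
    ⊓ LinearMap.range (Matrix.mulVecLin (subseq d W i j))

/-- The interval multiplicity
`ω_{ts} = rk W_{t∼s} − rk W_{t∼s−1} − rk W_{t+1∼s} + rk W_{t+1∼s−1}`,
with the convention `rk W_{y∼−1} = 0` encoded by the `s = 0` case. -/
noncomputable def omegaMult (d : ℕ → ℕ)
    (W : ∀ j : ℕ, Matrix (Fin (d (j + 1))) (Fin (d j)) ℝ) (t s : ℕ) : ℤ :=
  ((subseq d W s t).rank : ℤ)
    - (if s = 0 then 0 else ((subseq d W (s - 1) t).rank : ℤ))
    - ((subseq d W s (t + 1)).rank : ℤ)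
    + (if s = 0 then 0 else ((subseq d W (s - 1) (t + 1)).rank : ℤ))


lemma subseq_self (d : ℕ → ℕ) (W : ∀ j : ℕ, Matrix (Fin (d (j + 1))) (Fin (d j)) ℝ)
    (n : ℕ) : subseq d W n n = 1 := by
  cases n <;> simp [subseq]

lemma subseq_mul (d : ℕ → ℕ) (W : ∀ j : ℕ, Matrix (Fin (d (j + 1))) (Fin (d j)) ℝ) :
    ∀ (m j i : ℕ), i ≤ j → j ≤ m →
      subseq d W j m * subseq d W i j = subseq d W i m
  | 0, j, i, hij, hjm => by
      interval_cases j; interval_cases i; simp [subseq_self]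
  | m + 1, j, i, hij, hjm => by
      rcases eq_or_lt_of_le hjm with h | h
      · subst h; simp [subseq_self]
      · have hjm' : j ≤ m := Nat.lt_succ_iff.mp h
        have hi : i ≠ m + 1 := by omega
        have hj : j ≠ m + 1 := by omega
        rw [show subseq d W j (m+1) = W m * subseq d W j m from by rw [subseq, dif_neg hj],
            show subseq d W i (m+1) = W m * subseq d W i m from by rw [subseq, dif_neg hi],
            Matrix.mul_assoc, subseq_mul d W m j i hij hjm']

lemma flow_key (d : ℕ → ℕ) (W : ∀ j : ℕ, Matrix (Fin (d (j + 1))) (Fin (d j)) ℝ)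
    (k j i : ℕ) (hij : i ≤ j) (hjk : j ≤ k) :
    (Module.finrank ℝ ↥(LinearMap.ker (Matrix.mulVecLin (subseq d W j (k + 1)))
      ⊓ LinearMap.range (Matrix.mulVecLin (subseq d W i j))) : ℤ)
    = ((subseq d W i j).rank : ℤ) - ((subseq d W i (k+1)).rank : ℤ) := by
  set f := (subseq d W j (k+1)).mulVecLin
  set p := LinearMap.range (subseq d W i j).mulVecLin
  have h1 := LinearMap.finrank_range_add_finrank_ker (f.domRestrict p)
  have h2 : LinearMap.range (f.domRestrict p) = p.map f := LinearMap.range_domRestrict p f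
  have h3 : p.map f = LinearMap.range (subseq d W i (k+1)).mulVecLin := by
    rw [← LinearMap.range_comp, ← Matrix.mulVecLin_mul, subseq_mul d W (k+1) j i hij (by omega)]
  have h4 : LinearMap.ker (f.domRestrict p) = (LinearMap.ker f ⊓ p).comap p.subtype := by
    rw [LinearMap.ker_domRestrict, Submodule.comap_inf, Submodule.comap_subtype_self, inf_top_eq]
  have h5 : Module.finrank ℝ ↥(LinearMap.ker (f.domRestrict p))
      = Module.finrank ℝ ↥(LinearMap.ker f ⊓ p) := by
    rw [h4]
    exact (Submodule.comapSubtypeEquivOfLe inf_le_right).finrank_eq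
  rw [h2, h3, h5] at h1
  have hr1 : (subseq d W i j).rank = Module.finrank ℝ ↥p := rfl
  have hr2 : (subseq d W i (k+1)).rank
      = Module.finrank ℝ ↥(LinearMap.range (subseq d W i (k+1)).mulVecLin) := rfl
  rw [hr1, hr2]
  omega

lemma omega_inner_sum (d : ℕ → ℕ) (W : ∀ j : ℕ, Matrix (Fin (d (j + 1))) (Fin (d j)) ℝ)
    (t i : ℕ) :
    ∑ s ∈ Finset.range (i + 1), omegaMult d W t s
      = ((subseq d W i t).rank : ℤ) - ((subseq d W i (t+1)).rank : ℤ) := by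
  induction i with
  | zero => simp [omegaMult]
  | succ i ih =>
      rw [Finset.sum_range_succ, ih]
      simp only [omegaMult, Nat.succ_ne_zero, if_false, Nat.succ_sub_one]
      ring

lemma omega_outer_sum (d : ℕ → ℕ) (W : ∀ j : ℕ, Matrix (Fin (d (j + 1))) (Fin (d j)) ℝ)
    (i : ℕ) (j : ℕ) : ∀ k, j ≤ k →
    ∑ t ∈ Finset.Icc j k, (((subseq d W i t).rank : ℤ) - ((subseq d W i (t+1)).rank : ℤ))
      = ((subseq d W i j).rank : ℤ) - ((subseq d W i (k+1)).rank : ℤ) := by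
  intro k hk
  induction k with
  | zero => interval_cases j; simp
  | succ k ih =>
      rcases eq_or_lt_of_le hk with h | h
      · subst h; simp
      · have hjk : j ≤ k := by omega
        rw [Finset.sum_Icc_succ_top (by omega : j ≤ k + 1), ih hjk]
        ring

/-- part of Lemma `alphabeta`.
For `L ≥ k ≥ j ≥ i ≥ 0`, `dim A_{kji} = Σ_{t=j}^{k} Σ_{s=0}^{i} ω_{ts}`.
The convention `rk W_{L+1∼x} = 0` is encoded by the hypothesis that all
edge-layer matrices above layer `L` vanish. -/
theorem dim_flow_subspace_eq_sum_of_multiplicities (L : ℕ) (d : ℕ → ℕ)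
    (W : ∀ j : ℕ, Matrix (Fin (d (j + 1))) (Fin (d j)) ℝ)
    (hW : ∀ j, L ≤ j → W j = 0)
    (k j i : ℕ) (hij : i ≤ j) (hjk : j ≤ k) (hkL : k ≤ L) :
    (Module.finrank ℝ ↥(Aflow d W k j i) : ℤ)
      = ∑ t ∈ Finset.Icc j k, ∑ s ∈ Finset.range (i + 1), omegaMult d W t s := by
  rw [Finset.sum_congr rfl fun t _ => omega_inner_sum d W t i,
      omega_outer_sum d W i j k hjk]
  exact flow_key d W k j i hij hjk
end

section
/- Let θ = (W_L, ..., W_1) with product W = μ(θ). The rank of the differential map dμ(θ)(Δθ) = Σ_{j=1}^{L} W_{L∼j} ΔW_j W_{j−1∼0} (as a linear map from the weight space to ℝ^{d_L × d_0}) equals Σ_{j=1}^{L} rk W_{L∼j} · rk W_{j−1∼0} − Σ_{j=1}^{L−1} rk W_{L∼j} · rk W_{j∼0}. -/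
open Matrix

/-- The differential map `dμ(θ) : (ΔW_L, …, ΔW_1) ↦ Σ_{j=1}^{L} W_{L∼j} ΔW_j W_{j−1∼0}`
of the matrix multiplication map at `θ = (W_L, …, W_1)`, as a linear map from the
weight space to `ℝ^{d_L × d_0}`.  Edge layer `j` of the paper is index `j0 = j − 1`. -/
noncomputable def dmu (L : ℕ) (d : ℕ → ℕ)
    (W : ∀ j : ℕ, Matrix (Fin (d (j + 1))) (Fin (d j)) ℝ) :
    (∀ j0 : Fin L, Matrix (Fin (d (j0.1 + 1))) (Fin (d j0.1)) ℝ)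
      →ₗ[ℝ] Matrix (Fin (d L)) (Fin (d 0)) ℝ where
  toFun Δ := ∑ j0 : Fin L, subseq d W (j0.1 + 1) L * Δ j0 * subseq d W 0 j0.1
  map_add' a b := by
    simp only [Pi.add_apply, Matrix.mul_add, Matrix.add_mul]
    rw [Finset.sum_add_distrib]
  map_smul' c a := by
    simp only [Pi.smul_apply, Matrix.mul_smul, Matrix.smul_mul, RingHom.id_apply]
    rw [Finset.smul_sum]

/-!
The image of `dμ(θ)` is `Σ_j col(W_{L∼j}) ⊗ row(W_{j−1∼0})`, and `dim (U ⊗ V) = dim U · dim V`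
since `B ↦ A B C` maps matrices of the right size isomorphically onto `U ⊗ V` when the columns of
`A` and `Cᵀ` are bases of `U` and `V`. Along `j` the column spaces increase and the row spaces
decrease, so the `j`-th summand meets the sum of the earlier ones exactly in
`col(W_{L∼j−1}) ⊗ row(W_{j−1∼0})`; adding the summands one at a time, Grassmann's formula gives
the rank.
-/

open Module

theorem LinearMap.exists_comp_comp_self_eq {K V W : Type*} [DivisionRing K] [AddCommGroup V]
    [Module K V] [AddCommGroup W] [Module K W] (f : V →ₗ[K] W) :
    ∃ g : W →ₗ[K] V, f ∘ₗ g ∘ₗ f = f := by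
  obtain ⟨s, hs⟩ := f.rangeRestrict.exists_rightInverse_of_surjective f.range_rangeRestrict
  obtain ⟨π, hπ⟩ := (range f).subtype.exists_leftInverse_of_injective (range f).ker_subtype
  refine ⟨s ∘ₗ π, ?_⟩
  calc f ∘ₗ (s ∘ₗ π) ∘ₗ f
      = (range f).subtype ∘ₗ (f.rangeRestrict ∘ₗ s) ∘ₗ (π ∘ₗ (range f).subtype) ∘ₗ
          f.rangeRestrict := rfl
    _ = f := by rw [hs, hπ]; rfl

namespace Matrix

variable {K : Type*} [Field K] {m n p q : Type*} [Fintype m] [Fintype n] [Fintype p] [Fintype q]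

theorem exists_mul_mul_self_eq (A : Matrix m n K) :
    ∃ G : Matrix n m K, A * G * A = A := by
  classical
  obtain ⟨g, hg⟩ := A.toLin'.exists_comp_comp_self_eq
  refine ⟨LinearMap.toMatrix' g, toLin'.injective ?_⟩
  simpa [toLin'_mul, LinearMap.comp_assoc] using hg

theorem mul_mul_eq_of_range_le {A : Matrix m p K} {G : Matrix p m K} {M : Matrix m n K}
    (hG : A * G * A = A)
    (hM : LinearMap.range M.mulVecLin ≤ LinearMap.range A.mulVecLin) : A * G * M = M := by
  classical
  refine toLin'.injective (LinearMap.ext fun x => ?_)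
  obtain ⟨y, hy⟩ := hM ⟨x, rfl⟩
  simp only [toLin'_apply, mulVecLin_apply] at hy ⊢
  rw [← mulVec_mulVec, ← hy, mulVec_mulVec, hG]

/-- `U ⊗ V` in the paper's notation. -/
def colRowSubmodule (U : Submodule K (m → K)) (V : Submodule K (n → K)) :
    Submodule K (Matrix m n K) where
  carrier := {M | (∀ x, M *ᵥ x ∈ U) ∧ ∀ y, Mᵀ *ᵥ y ∈ V}
  add_mem' {M N} hM hN := ⟨fun x => by simpa [add_mulVec] using U.add_mem (hM.1 x) (hN.1 x),
    fun y => by simpa [add_mulVec] using V.add_mem (hM.2 y) (hN.2 y)⟩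
  zero_mem' := ⟨fun _ => by simp, fun _ => by simp⟩
  smul_mem' c M hM := ⟨fun x => by simpa [smul_mulVec] using U.smul_mem c (hM.1 x),
    fun y => by simpa [smul_mulVec] using V.smul_mem c (hM.2 y)⟩

theorem mem_colRowSubmodule {U : Submodule K (m → K)} {V : Submodule K (n → K)}
    {M : Matrix m n K} : M ∈ colRowSubmodule U V ↔ (∀ x, M *ᵥ x ∈ U) ∧ ∀ y, Mᵀ *ᵥ y ∈ V :=
  Iff.rfl

theorem colRowSubmodule_mono {U U' : Submodule K (m → K)} {V V' : Submodule K (n → K)}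
    (hU : U ≤ U') (hV : V ≤ V') : colRowSubmodule U V ≤ colRowSubmodule U' V' :=
  fun _ hM => ⟨fun x => hU (hM.1 x), fun y => hV (hM.2 y)⟩

theorem colRowSubmodule_inf_colRowSubmodule (U U' : Submodule K (m → K))
    (V V' : Submodule K (n → K)) :
    colRowSubmodule U V ⊓ colRowSubmodule U' V' = colRowSubmodule (U ⊓ U') (V ⊓ V') := by
  ext M
  simp only [Submodule.mem_inf, mem_colRowSubmodule, forall_and]
  tauto

omit [Fintype m] [Fintype n] in
def mulLeftRight (A : Matrix m p K) (C : Matrix q n K) : Matrix p q K →ₗ[K] Matrix m n K where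
  toFun B := A * B * C
  map_add' B B' := by simp only [Matrix.mul_add, Matrix.add_mul]
  map_smul' c B := by simp only [Matrix.mul_smul, Matrix.smul_mul, RingHom.id_apply]

theorem range_mulLeftRight (A : Matrix m p K) (C : Matrix q n K) :
    LinearMap.range (mulLeftRight A C) =
      colRowSubmodule (LinearMap.range A.mulVecLin) (LinearMap.range Cᵀ.mulVecLin) := by
  classical
  apply le_antisymm
  · rintro _ ⟨B, rfl⟩
    refine ⟨fun x => ⟨(B * C) *ᵥ x, ?_⟩, fun y => ⟨(Bᵀ * Aᵀ) *ᵥ y, ?_⟩⟩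
    · show A *ᵥ ((B * C) *ᵥ x) = (A * B * C) *ᵥ x
      rw [mulVec_mulVec, Matrix.mul_assoc]
    · show Cᵀ *ᵥ ((Bᵀ * Aᵀ) *ᵥ y) = (A * B * C)ᵀ *ᵥ y
      rw [mulVec_mulVec, transpose_mul, transpose_mul]
  · intro M ⟨hcol, hrow⟩
    obtain ⟨G, hG⟩ := exists_mul_mul_self_eq A
    obtain ⟨H, hH⟩ := exists_mul_mul_self_eq Cᵀ
    have hAGM : A * G * M = M := mul_mul_eq_of_range_le hG (by rintro _ ⟨x, rfl⟩; exact hcol x)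
    have hMHC : M * Hᵀ * C = M := by
      have := congrArg transpose (mul_mul_eq_of_range_le hH (by rintro _ ⟨y, rfl⟩; exact hrow y))
      rwa [transpose_mul, transpose_mul, transpose_transpose, transpose_transpose,
        ← Matrix.mul_assoc] at this
    refine ⟨G * M * Hᵀ, ?_⟩
    calc A * (G * M * Hᵀ) * C = A * G * M * Hᵀ * C := by simp only [Matrix.mul_assoc]
      _ = M := by rw [hAGM, hMHC]

theorem range_mulVecLin_mul_le {l : Type*} (A : Matrix l m K) (B : Matrix m n K) :
    LinearMap.range (A * B).mulVecLin ≤ LinearMap.range A.mulVecLin := by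
  rw [mulVecLin_mul]
  exact LinearMap.range_comp_le_range _ _

theorem exists_mul_eq_one_and_range_eq (U : Submodule K (m → K)) :
    ∃ (P : Matrix m (Fin (finrank K U)) K) (P' : Matrix (Fin (finrank K U)) m K),
      P' * P = 1 ∧ LinearMap.range P.mulVecLin = U := by
  classical
  let f := U.subtype ∘ₗ (finBasis K U).equivFun.symm.toLinearMap
  obtain ⟨g, hg⟩ := f.exists_leftInverse_of_injective
    (LinearMap.ker_eq_bot.mpr (U.injective_subtype.comp (LinearEquiv.injective _)))
  refine ⟨LinearMap.toMatrix' f, LinearMap.toMatrix' g, ?_, ?_⟩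
  · rw [← LinearMap.toMatrix'_comp, hg, LinearMap.toMatrix'_id]
  · rw [← toLin'_apply', toLin'_toMatrix', LinearMap.range_comp, LinearEquiv.range,
      Submodule.map_top, Submodule.range_subtype]

theorem finrank_colRowSubmodule (U : Submodule K (m → K)) (V : Submodule K (n → K)) :
    finrank K (colRowSubmodule U V) = finrank K U * finrank K V := by
  classical
  obtain ⟨P, P', hP, hPU⟩ := exists_mul_eq_one_and_range_eq U
  obtain ⟨Q, Q', hQ, hQV⟩ := exists_mul_eq_one_and_range_eq V
  have hQt : Qᵀ * Q'ᵀ = 1 := by rw [← transpose_mul, hQ, transpose_one]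
  have hinv : Function.LeftInverse (mulLeftRight P' Q'ᵀ) (mulLeftRight P Qᵀ) := fun B => by
    change P' * (P * B * Qᵀ) * Q'ᵀ = B
    simp only [Matrix.mul_assoc, hQt, Matrix.mul_one]
    rw [← Matrix.mul_assoc, hP, Matrix.one_mul]
  have hrange : LinearMap.range (mulLeftRight P Qᵀ) = colRowSubmodule U V := by
    rw [range_mulLeftRight, transpose_transpose, hPU, hQV]
  rw [← hrange, LinearMap.finrank_range_of_inj hinv.injective, finrank_matrix]
  simp

theorem iSup_colRowSubmodule_inf_colRowSubmodule (U : ℕ → Submodule K (m → K))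
    (V : ℕ → Submodule K (n → K)) (k : ℕ) (hU : MonotoneOn U (Set.Iic (k + 1)))
    (hV : AntitoneOn V (Set.Iic (k + 1))) :
    (⨆ j ≤ k, colRowSubmodule (U j) (V j)) ⊓ colRowSubmodule (U (k + 1)) (V (k + 1)) =
      colRowSubmodule (U k) (V (k + 1)) := by
  have hk : k ∈ Set.Iic (k + 1) := Set.mem_Iic.mpr k.le_succ
  have hsum : ⨆ j ≤ k, colRowSubmodule (U j) (V j) ≤ colRowSubmodule (U k) ⊤ :=
    iSup₂_le fun j hj =>
      colRowSubmodule_mono (hU (Set.mem_Iic.mpr (by omega)) hk hj) le_top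
  have hnew : colRowSubmodule (U k) (V (k + 1)) ≤ colRowSubmodule (U k) (V k) :=
    colRowSubmodule_mono le_rfl (hV hk Set.self_mem_Iic k.le_succ)
  apply le_antisymm
  · calc _ ≤ colRowSubmodule (U k) ⊤ ⊓ colRowSubmodule ⊤ (V (k + 1)) :=
          inf_le_inf hsum (colRowSubmodule_mono le_top le_rfl)
      _ = _ := by rw [colRowSubmodule_inf_colRowSubmodule, inf_top_eq, top_inf_eq]
  · exact le_inf (hnew.trans (le_iSup₂_of_le k le_rfl le_rfl))
      (colRowSubmodule_mono (hU hk Set.self_mem_Iic k.le_succ) le_rfl)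

theorem finrank_iSup_colRowSubmodule_add_sum (U : ℕ → Submodule K (m → K))
    (V : ℕ → Submodule K (n → K)) (k : ℕ) (hU : MonotoneOn U (Set.Iic k))
    (hV : AntitoneOn V (Set.Iic k)) :
    finrank K ↥(⨆ j ≤ k, colRowSubmodule (U j) (V j)) +
        ∑ j ∈ Finset.range k, finrank K (U j) * finrank K (V (j + 1)) =
      ∑ j ∈ Finset.range (k + 1), finrank K (U j) * finrank K (V j) := by
  induction k with
  | zero =>
    rw [show ⨆ j ≤ 0, colRowSubmodule (U j) (V j) = colRowSubmodule (U 0) (V 0) by simp]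
    simp [finrank_colRowSubmodule]
  | succ k ih =>
    have hsub : Set.Iic k ⊆ Set.Iic (k + 1) := Set.Iic_subset_Iic.mpr k.le_succ
    have hdim := Submodule.finrank_sup_add_finrank_inf_eq
      (⨆ j ≤ k, colRowSubmodule (U j) (V j)) (colRowSubmodule (U (k + 1)) (V (k + 1)))
    rw [iSup_colRowSubmodule_inf_colRowSubmodule U V k hU hV, finrank_colRowSubmodule,
      finrank_colRowSubmodule] at hdim
    rw [Nat.iSup_le_succ, Finset.sum_range_succ, Finset.sum_range_succ _ (k + 1)]
    have := ih (hU.mono hsub) (hV.mono hsub)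
    omega

end Matrix

section Subseq

variable (d : ℕ → ℕ) (W : ∀ j : ℕ, Matrix (Fin (d (j + 1))) (Fin (d j)) ℝ)

theorem subseq_self_s16 (i : ℕ) : subseq d W i i = 1 := by
  cases i <;> simp [subseq]

theorem subseq_succ {i k : ℕ} (h : i ≤ k) : subseq d W i (k + 1) = W k * subseq d W i k := by
  rw [subseq, dif_neg (by omega)]

theorem subseq_eq_mul_of_lt {i k : ℕ} (h : i < k) :
    subseq d W i k = subseq d W (i + 1) k * W i := by
  induction k, h using Nat.le_induction with
  | base => rw [subseq_succ d W le_rfl, subseq_self_s16, subseq_self_s16, Matrix.mul_one, Matrix.one_mul]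
  | succ k hik ih =>
    rw [subseq_succ d W (by omega), subseq_succ d W hik, ih, Matrix.mul_assoc]

theorem range_subseq_mono {i i' L : ℕ} (h : i ≤ i') (h' : i' ≤ L) :
    LinearMap.range (subseq d W i L).mulVecLin ≤ LinearMap.range (subseq d W i' L).mulVecLin := by
  induction i', h using Nat.le_induction with
  | base => exact le_rfl
  | succ i' hii' ih =>
    refine (ih (by omega)).trans ?_
    rw [subseq_eq_mul_of_lt d W (by omega : i' < L)]
    exact Matrix.range_mulVecLin_mul_le _ _

theorem range_subseq_transpose_antitone :
    Antitone fun j => LinearMap.range (subseq d W 0 j)ᵀ.mulVecLin := by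
  refine antitone_nat_of_succ_le fun j => ?_
  rw [subseq_succ d W j.zero_le, Matrix.transpose_mul]
  exact Matrix.range_mulVecLin_mul_le _ _

end Subseq

theorem range_dmu (L : ℕ) (d : ℕ → ℕ) (W : ∀ j : ℕ, Matrix (Fin (d (j + 1))) (Fin (d j)) ℝ) :
    LinearMap.range (dmu L d W) =
      ⨆ j < L, LinearMap.range (Matrix.mulLeftRight (subseq d W (j + 1) L) (subseq d W 0 j)) := by
  apply le_antisymm
  · rintro _ ⟨Δ, rfl⟩
    change ∑ j : Fin L, _ ∈ _
    refine Submodule.sum_mem _ fun j _ => ?_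
    exact Submodule.mem_iSup_of_mem j.1 (Submodule.mem_iSup_of_mem j.2 ⟨Δ j, rfl⟩)
  · refine iSup₂_le fun j hj => ?_
    rintro _ ⟨B, rfl⟩
    classical
    refine ⟨Pi.single ⟨j, hj⟩ B, ?_⟩
    change ∑ i : Fin L, _ = _
    rw [Fintype.sum_eq_single ⟨j, hj⟩ fun i hi => by
      rw [Pi.single_eq_of_ne hi, Matrix.mul_zero, Matrix.zero_mul], Pi.single_eq_same]
    rfl

/-- Trager–Kohn–Bruna, Lemma 3.
The rank of the differential map `dμ(θ)` equals
`Σ_{j=1}^{L} rk W_{L∼j} · rk W_{j−1∼0} − Σ_{j=1}^{L−1} rk W_{L∼j} · rk W_{j∼0}`. -/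
theorem rank_dmu (L : ℕ) (d : ℕ → ℕ)
    (W : ∀ j : ℕ, Matrix (Fin (d (j + 1))) (Fin (d j)) ℝ) :
    (Module.finrank ℝ ↥(LinearMap.range (dmu L d W)) : ℤ)
      = ∑ j0 ∈ Finset.range L,
          ((subseq d W (j0 + 1) L).rank : ℤ) * ((subseq d W 0 j0).rank : ℤ)
        - ∑ j ∈ Finset.Icc 1 (L - 1),
            ((subseq d W j L).rank : ℤ) * ((subseq d W 0 j).rank : ℤ) := by
  rcases L with _ | k
  · simp [range_dmu]
  let U j := LinearMap.range (subseq d W (j + 1) (k + 1)).mulVecLin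
  let V j := LinearMap.range (subseq d W 0 j)ᵀ.mulVecLin
  have hU : MonotoneOn U (Set.Iic k) := fun _ _ _ hj hij =>
    range_subseq_mono d W (Nat.succ_le_succ hij) (Nat.succ_le_succ hj)
  have hrange :
      LinearMap.range (dmu (k + 1) d W) = ⨆ j ≤ k, Matrix.colRowSubmodule (U j) (V j) := by
    simp_rw [range_dmu, Matrix.range_mulLeftRight, Nat.lt_succ_iff]
    rfl
  have key : finrank ℝ (LinearMap.range (dmu (k + 1) d W)) +
      ∑ j ∈ Finset.range k, (subseq d W (j + 1) (k + 1)).rank * (subseq d W 0 (j + 1))ᵀ.rank =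
      ∑ j ∈ Finset.range (k + 1), (subseq d W (j + 1) (k + 1)).rank * (subseq d W 0 j)ᵀ.rank :=
    hrange ▸ Matrix.finrank_iSup_colRowSubmodule_add_sum U V k hU
      ((range_subseq_transpose_antitone d W).antitoneOn _)
  have hIcc (f : ℕ → ℤ) : ∑ j ∈ Finset.Icc 1 k, f j = ∑ j ∈ Finset.range k, f (j + 1) := by
    rw [Finset.range_eq_Ico, Finset.sum_Ico_add', ← Finset.Ico_add_one_right_eq_Icc]
  simp only [Matrix.rank_transpose] at key
  rw [Nat.add_sub_cancel, hIcc, eq_sub_iff_add_eq]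
  exact_mod_cast key
end
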